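/- arXiv:1404.1863 — 4 statements merged into one kernel-verified Lean document; each statement's English description precedes it below -/
import Mathlib

section
/- For all real θ₁, θ₂, the function J(θ₁,θ₂) = 8π²(cos(2π(2θ₁+θ₂)) + cos(2π(θ₁−3θ₂)) + cos(2π(3θ₁−2θ₂)) − cos(2π(θ₁+2θ₂)) − cos(2π(3θ₁−θ₂)) − cos(2π(2θ₁−3θ₂))) equals 256π² sin(πθ₁) sin(πθ₂) sin(π(θ₁+θ₂)) sin(π(θ₁−θ₂)) sin(π(2θ₁−θ₂)) sin(π(θ₁−2θ₂)). -/
open Real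

lemma G2_key (a b : ℝ) :
    cos (2*(2*a+b)) + cos (2*(a-3*b)) + cos (2*(3*a-2*b)) - cos (2*(a+2*b))
      - cos (2*(3*a-b)) - cos (2*(2*a-3*b))
    = 32 * sin a * sin b * sin (a+b) * sin (a-b) * sin (2*a-b) * sin (a-2*b) := by
  have h1 : sin a ^ 2 + cos a ^ 2 = 1 := sin_sq_add_cos_sq a
  have h2 : sin b ^ 2 + cos b ^ 2 = 1 := sin_sq_add_cos_sq b
  rw [show 2*(2*a+b) = (a+a)+(a+a)+(b+b) by ring,
      show 2*(a-3*b) = (a+a)-((b+b)+(b+b)+(b+b)) by ring,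
      show 2*(3*a-2*b) = ((a+a)+(a+a)+(a+a))-((b+b)+(b+b)) by ring,
      show 2*(a+2*b) = (a+a)+((b+b)+(b+b)) by ring,
      show 2*(3*a-b) = ((a+a)+(a+a)+(a+a))-(b+b) by ring,
      show 2*(2*a-3*b) = (a+a)+(a+a)-((b+b)+(b+b)+(b+b)) by ring,
      show 2*a-b = (a+a)-b by ring,
      show a-2*b = a-(b+b) by ring]
  simp only [cos_add, cos_sub, sin_add, sin_sub]
  set sa := sin a
  set ca := cos a
  set sb := sin b
  set cb := cos b
  linear_combination ((1)*ca^2*cb^4 + (-1)*ca^2*cb^6 + (-6)*ca^2*sb^2*cb^2 + (15)*ca^2*sb^2*cb^4 + (1)*ca^2*sb^4 + (-15)*ca^2*sb^4*cb^2 + (1)*ca^2*sb^6 + (-1)*ca^4*cb^2 + (1)*ca^4*cb^4 + (1)*ca^4*sb^2 + (-6)*ca^4*sb^2*cb^2 + (1)*ca^4*sb^4 + (-20)*sa^1*ca^1*sb^1*cb^1 + (24)*sa^1*ca^1*sb^1*cb^3 + (-24)*sa^1*ca^1*sb^1*cb^5 + (-24)*sa^1*ca^1*sb^3*cb^1 +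 (80)*sa^1*ca^1*sb^3*cb^3 + (40)*sa^1*ca^1*sb^5*cb^1 + (-12)*sa^1*ca^3*sb^1*cb^1 + (24)*sa^1*ca^3*sb^1*cb^3 + (-24)*sa^1*ca^3*sb^3*cb^1 + (64)*sa^1*ca^3*sb^5*cb^1 + (10)*sa^2*cb^2 + (-17)*sa^2*cb^4 + (7)*sa^2*cb^6 + (-10)*sa^2*sb^2 + (102)*sa^2*sb^2*cb^2 + (-105)*sa^2*sb^2*cb^4 + (-17)*sa^2*sb^4 + (-55)*sa^2*sb^4*cb^2 + (25)*sa^2*sb^6 + (16)*sa^2*ca^2*cb^2 + (-16)*sa^2*ca^2*cb^4 + (-16)*sa^2*ca^2*sb^2 + (96)*sa^2*ca^2*sb^2*cb^2 + (-16)*sa^2*ca^2*sb^4 + (-160)*sa^2*ca^2*sb^4*cb^2 + (32)*sa^2*ca^2*sb^6 + (52)*sa^3*ca^1*sb^1*cb^1 + (-104)*sa^3*ca^1*sb^1*cb^3 + (104)*sa^3*ca^1*sb^3*cb^1 + (-192)*sa^3*ca^1*sb^5*cb^1 + (-31)*sa^4*cb^2 + (31)*sa^4*cb^4 + (31)*sa^4*sb^2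 + (-186)*sa^4*sb^2*cb^2 + (160)*sa^4*sb^2*cb^4 + (31)*sa^4*sb^4 + (160)*sa^4*sb^4*cb^2 + (-64)*sa^4*sb^6) * h1 + ((20)*sa^1*ca^1*sb^1*cb^1 + (-12)*sa^1*ca^1*sb^1*cb^3 + (52)*sa^1*ca^1*sb^3*cb^1 + (-10)*sa^2*cb^2 + (6)*sa^2*cb^4 + (10)*sa^2*sb^2 + (-96)*sa^2*sb^2*cb^2 + (26)*sa^2*sb^4 + (-80)*sa^3*ca^1*sb^1*cb^1 + (48)*sa^3*ca^1*sb^1*cb^3 + (-208)*sa^3*ca^1*sb^3*cb^1 + (40)*sa^4*cb^2 + (-8)*sa^4*cb^4 + (-40)*sa^4*sb^2 + (288)*sa^4*sb^2*cb^2 + (-88)*sa^4*sb^4 + (64)*sa^5*ca^1*sb^1*cb^1 + (-64)*sa^5*ca^1*sb^1*cb^3 + (192)*sa^5*ca^1*sb^3*cb^1 + (-32)*sa^6*cb^2 + (32)*sa^6*sb^2 + (-192)*sa^6*sb^2*cb^2 + (64)*sa^6*sb^4) * h2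

theorem G2_jacobian_cos_eq_sin_product (θ₁ θ₂ : ℝ) :
    8 * π ^ 2 * (cos (2 * π * (2 * θ₁ + θ₂)) + cos (2 * π * (θ₁ - 3 * θ₂))
        + cos (2 * π * (3 * θ₁ - 2 * θ₂)) - cos (2 * π * (θ₁ + 2 * θ₂))
        - cos (2 * π * (3 * θ₁ - θ₂)) - cos (2 * π * (2 * θ₁ - 3 * θ₂)))
      = 256 * π ^ 2 * sin (π * θ₁) * sin (π * θ₂) * sin (π * (θ₁ + θ₂))
        * sin (π * (θ₁ - θ₂)) * sin (π * (2 * θ₁ - θ₂)) * sin (π * (θ₁ - 2 * θ₂)) := by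
  have h := G2_key (π * θ₁) (π * θ₂)
  rw [show 2 * π * (2 * θ₁ + θ₂) = 2*(2*(π*θ₁)+(π*θ₂)) by ring,
      show 2 * π * (θ₁ - 3 * θ₂) = 2*((π*θ₁)-3*(π*θ₂)) by ring,
      show 2 * π * (3 * θ₁ - 2 * θ₂) = 2*(3*(π*θ₁)-2*(π*θ₂)) by ring,
      show 2 * π * (θ₁ + 2 * θ₂) = 2*((π*θ₁)+2*(π*θ₂)) by ring,
      show 2 * π * (3 * θ₁ - θ₂) = 2*(3*(π*θ₁)-(π*θ₂)) by ring,
      show 2 * π * (2 * θ₁ - 3 * θ₂) = 2*(2*(π*θ₁)-3*(π*θ₂)) by ring,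
      show π * (θ₁ + θ₂) = (π*θ₁)+(π*θ₂) by ring,
      show π * (θ₁ - θ₂) = (π*θ₁)-(π*θ₂) by ring,
      show π * (2 * θ₁ - θ₂) = 2*(π*θ₁)-(π*θ₂) by ring,
      show π * (θ₁ - 2 * θ₂) = (π*θ₁)-2*(π*θ₂) by ring]
  linear_combination 8 * π ^ 2 * h
end

section
/- The range of the function x(θ₁,θ₂) = 1 + 2cos(2πθ₁) + 2cos(2πθ₂) + 2cos(2π(θ₁−θ₂)) over all real (θ₁,θ₂) is the closed interval [−2, 7]. -/
open Real

theorem G2_chi1_range :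
    Set.range (fun p : ℝ × ℝ =>
        1 + 2 * cos (2 * π * p.1) + 2 * cos (2 * π * p.2) + 2 * cos (2 * π * (p.1 - p.2)))
      = Set.Icc (-2 : ℝ) 7 := by
  apply Set.eq_of_subset_of_subset
  · rintro y ⟨⟨t1, t2⟩, rfl⟩
    simp only
    set a := 2 * π * t1 with ha
    set b := 2 * π * t2 with hb
    have hab : 2 * π * (t1 - t2) = a - b := by ring
    rw [hab, Real.cos_sub]
    constructor
    · nlinarith [sin_sq_add_cos_sq a, sin_sq_add_cos_sq b,
        sq_nonneg (sin a + sin b), sq_nonneg (cos a + cos b + 1)]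
    · nlinarith [cos_le_one a, cos_le_one b, neg_one_le_cos a, neg_one_le_cos b,
        sin_sq_add_cos_sq a, sin_sq_add_cos_sq b, sq_nonneg (sin a - sin b),
        sq_nonneg (cos a - cos b)]
  · intro y hy
    set g : ℝ → ℝ := fun t => 1 + 2 * cos (2 * π * t) + 2 * cos (2 * π * (-t)) +
      2 * cos (2 * π * (t - -t)) with hg
    have hcont : ContinuousOn g (Set.Icc (0:ℝ) (1/3)) := by
      apply Continuous.continuousOn
      fun_prop
    have hg0 : g 0 = 7 := by simp [hg]; norm_num
    have hg13 : g (1/3) = -2 := by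
      have h1 : 2 * π * (1/3 : ℝ) = π - π/3 := by ring
      have h2 : 2 * π * (-(1/3) : ℝ) = -(π - π/3) := by ring
      have h3 : 2 * π * ((1/3 : ℝ) - -(1/3)) = 2*π - (π - π/3) := by ring
      rw [hg]
      simp only [h1, h2, h3, Real.cos_neg, Real.cos_two_pi_sub, Real.cos_pi_sub,
        Real.cos_pi_div_three]
      ring
    have : y ∈ Set.Icc (g (1/3)) (g 0) := by rw [hg0, hg13]; exact hy
    obtain ⟨t, _, htv⟩ := intermediate_value_Icc' (by norm_num : (0:ℝ) ≤ 1/3) hcont this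
    exact ⟨(t, -t), htv⟩
end

section
/- The range of the function y(θ₁,θ₂) = 2 + 2cos(2πθ₁) + 2cos(2πθ₂) + 2cos(2π(θ₁−θ₂)) + 2cos(2π(θ₁+θ₂)) + 2cos(2π(2θ₁−θ₂)) + 2cos(2π(θ₁−2θ₂)) over all real (θ₁,θ₂) is the closed interval [−2, 14]. -/
/-!
Writing `x = cos 2πθ₁`, `y = cos 2πθ₂`, `z = cos 2π(θ₁ - θ₂)`, the addition formulas turn the
character into `2 + 4 (xy + yz + zx)`. On the cube `[-1, 1]³` the quadratic form `xy + yz + zx`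
lies in `[-1, 3]`; the lower bound is the identity
`(1 + x)(1 + y)(1 + z) + (1 - x)(1 - y)(1 - z) = 2 + 2 (xy + yz + zx)`.
Both bounds are attained, at `(θ₁, θ₂) = (1/2, 1/2)` and `(0, 0)`, and the range of a continuous
function on the connected plane is an interval, so it is all of `[-2, 14]`.
-/

open Real

noncomputable def g2AdjointCharacter (p : ℝ × ℝ) : ℝ :=
  2 + 2 * cos (2 * π * p.1) + 2 * cos (2 * π * p.2) + 2 * cos (2 * π * (p.1 - p.2))
    + 2 * cos (2 * π * (p.1 + p.2)) + 2 * cos (2 * π * (2 * p.1 - p.2))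
    + 2 * cos (2 * π * (p.1 - 2 * p.2))

lemma neg_one_le_mul_add_mul_add_mul {x y z : ℝ} (hx : x ∈ Set.Icc (-1) 1)
    (hy : y ∈ Set.Icc (-1) 1) (hz : z ∈ Set.Icc (-1) 1) : -1 ≤ x * y + y * z + z * x := by
  obtain ⟨hx₁, hx₂⟩ := hx
  obtain ⟨hy₁, hy₂⟩ := hy
  obtain ⟨hz₁, hz₂⟩ := hz
  have hplus : 0 ≤ (1 + x) * (1 + y) * (1 + z) :=
    mul_nonneg (mul_nonneg (by linarith) (by linarith)) (by linarith)
  have hminus : 0 ≤ (1 - x) * (1 - y) * (1 - z) :=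
    mul_nonneg (mul_nonneg (by linarith) (by linarith)) (by linarith)
  linear_combination (hplus + hminus) / 2

lemma mul_le_one_of_mem_Icc {x y : ℝ} (hx : x ∈ Set.Icc (-1) 1) (hy : y ∈ Set.Icc (-1) 1) :
    x * y ≤ 1 :=
  (le_abs_self _).trans <| abs_mul x y ▸ mul_le_one₀ (abs_le.mpr hx) (abs_nonneg y) (abs_le.mpr hy)

lemma mul_add_mul_add_mul_le_three {x y z : ℝ} (hx : x ∈ Set.Icc (-1) 1)
    (hy : y ∈ Set.Icc (-1) 1) (hz : z ∈ Set.Icc (-1) 1) : x * y + y * z + z * x ≤ 3 := by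
  linarith [mul_le_one_of_mem_Icc hx hy, mul_le_one_of_mem_Icc hy hz, mul_le_one_of_mem_Icc hz hx]

lemma g2AdjointCharacter_eq (p : ℝ × ℝ) :
    g2AdjointCharacter p = 2 + 4 * (cos (2 * π * p.1) * cos (2 * π * p.2)
      + cos (2 * π * p.2) * cos (2 * π * (p.1 - p.2))
      + cos (2 * π * (p.1 - p.2)) * cos (2 * π * p.1)) := by
  set a := 2 * π * p.1
  set b := 2 * π * p.2
  have hsub : 2 * π * (p.1 - p.2) = a - b := by ring
  have hadd : 2 * π * (p.1 + p.2) = a + b := by ring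
  have h₁ : 2 * π * (2 * p.1 - p.2) = a + (a - b) := by ring
  have h₂ : 2 * π * (p.1 - 2 * p.2) = (a - b) - b := by ring
  rw [g2AdjointCharacter, hsub, hadd, h₁, h₂, cos_add a b, cos_add a (a - b), cos_sub (a - b) b,
    cos_sub a b, sin_sub a b]
  linear_combination (-2 * cos b) * sin_sq_add_cos_sq a + (-2 * cos a) * sin_sq_add_cos_sq b

lemma g2AdjointCharacter_mem_Icc (p : ℝ × ℝ) : g2AdjointCharacter p ∈ Set.Icc (-2) 14 := by
  have hcos (t : ℝ) : cos t ∈ Set.Icc (-1) 1 := ⟨neg_one_le_cos t, cos_le_one t⟩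
  have hlow := neg_one_le_mul_add_mul_add_mul (hcos (2 * π * p.1)) (hcos (2 * π * p.2))
    (hcos (2 * π * (p.1 - p.2)))
  have hup := mul_add_mul_add_mul_le_three (hcos (2 * π * p.1)) (hcos (2 * π * p.2))
    (hcos (2 * π * (p.1 - p.2)))
  rw [g2AdjointCharacter_eq]
  constructor <;> linarith

lemma continuous_g2AdjointCharacter : Continuous g2AdjointCharacter := by
  unfold g2AdjointCharacter; fun_prop

lemma g2AdjointCharacter_zero : g2AdjointCharacter (0, 0) = 14 := by
  norm_num [g2AdjointCharacter]

lemma g2AdjointCharacter_half : g2AdjointCharacter (1 / 2, 1 / 2) = -2 := by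
  have hπ : 2 * π * (1 / 2) = π := by ring
  norm_num [g2AdjointCharacter_eq, hπ]

theorem G2_chi2_range :
    Set.range (fun p : ℝ × ℝ =>
        2 + 2 * cos (2 * π * p.1) + 2 * cos (2 * π * p.2) + 2 * cos (2 * π * (p.1 - p.2))
          + 2 * cos (2 * π * (p.1 + p.2)) + 2 * cos (2 * π * (2 * p.1 - p.2))
          + 2 * cos (2 * π * (p.1 - 2 * p.2)))
      = Set.Icc (-2 : ℝ) 14 := by
  change Set.range g2AdjointCharacter = _
  refine (Set.range_subset_iff.mpr g2AdjointCharacter_mem_Icc).antisymm ?_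
  exact (isPreconnected_range continuous_g2AdjointCharacter).Icc_subset
    ⟨_, g2AdjointCharacter_half⟩ ⟨_, g2AdjointCharacter_zero⟩
end

section
/- With θ₁ = 4/21, θ₂ = 20/21, the value (1/(8π²))|J(θ₁,θ₂)| equals (7−√21)/4, where J(θ₁,θ₂) = 256π² sin(πθ₁) sin(πθ₂) sin(π(θ₁+θ₂)) sin(π(θ₁−θ₂)) sin(π(2θ₁−θ₂)) sin(π(θ₁−2θ₂)). Equivalently, 32|sin(4π/21) sin(20π/21) sin(24π/21) sin(16π/21) sin(12π/21) sin(36π/21)| = (7−√21)/4. -/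
open Real

private lemma cos7_cubic : 8 * Real.cos (π/7) ^ 3 - 4 * Real.cos (π/7) ^ 2
    - 4 * Real.cos (π/7) + 1 = 0 := by
  set c := Real.cos (π/7) with hc
  set s := Real.sin (π/7) with hs
  have pyth : s ^ 2 + c ^ 2 = 1 := Real.sin_sq_add_cos_sq (π/7)
  have h7 : Real.cos (4*(π/7) + 3*(π/7)) = -1 := by
    rw [show 4*(π/7) + 3*(π/7) = π by ring]; exact Real.cos_pi
  rw [Real.cos_add, show (4:ℝ)*(π/7) = 2*(2*(π/7)) by ring,
      show (3:ℝ)*(π/7) = 2*(π/7) + π/7 by ring, Real.cos_add, Real.sin_add] at h7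
  simp only [Real.cos_two_mul, Real.sin_two_mul, ← hc, ← hs] at h7
  have key : (c + 1) * (8*c^3 - 4*c^2 - 4*c + 1)^2 = 0 := by
    linear_combination h7 + ((6:ℝ)*c^1 + (-40:ℝ)*c^3 + (48:ℝ)*c^5) * pyth
  have hcpos : (1:ℝ)/2 < c := by
    have h := Real.cos_lt_cos_of_nonneg_of_le_pi (by positivity)
      (by linarith [Real.pi_pos]) (by linarith [Real.pi_pos] : π/7 < π/3)
    rwa [Real.cos_pi_div_three] at h
  have hne : (c + 1) ≠ 0 := by linarith
  have := (mul_eq_zero.mp key).resolve_left hne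
  have := pow_eq_zero_iff (n := 2) (by norm_num) |>.mp this
  linarith

private lemma sqrt7_eq : Real.sqrt 7 =
    4 * Real.sin (π/7) * (2 * Real.cos (π/7) - 1) * (Real.cos (π/7) + 1) := by
  set c := Real.cos (π/7) with hc
  set s := Real.sin (π/7) with hs
  have pyth : s ^ 2 + c ^ 2 = 1 := Real.sin_sq_add_cos_sq (π/7)
  have hp := cos7_cubic
  rw [← hc] at hp
  have hsq : (4 * s * (2*c - 1) * (c + 1))^2 = 7 := by
    linear_combination ((16:ℝ) + (-32:ℝ)*c^1 + (-48:ℝ)*c^2 + (64:ℝ)*c^3 + (64:ℝ)*c^4) * pyth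
      + ((9:ℝ) + (4:ℝ)*c^1 + (-12:ℝ)*c^2 + (-8:ℝ)*c^3) * hp
  have hcpos : (1:ℝ)/2 < c := by
    have h := Real.cos_lt_cos_of_nonneg_of_le_pi (by positivity)
      (by linarith [Real.pi_pos]) (by linarith [Real.pi_pos] : π/7 < π/3)
    rwa [Real.cos_pi_div_three] at h
  have hspos : 0 < s := Real.sin_pos_of_pos_of_lt_pi (by positivity)
    (by linarith [Real.pi_pos])
  have hnn : 0 ≤ 4 * s * (2*c - 1) * (c + 1) :=
    mul_nonneg (mul_nonneg (by linarith) (by linarith)) (by linarith)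
  rw [← hsq, Real.sqrt_sq hnn]

theorem G2_E3_jacobian_value :
    (1 / (8 * π ^ 2)) *
        |256 * π ^ 2 * sin (π * (4 / 21)) * sin (π * (20 / 21)) * sin (π * (4 / 21 + 20 / 21))
          * sin (π * (4 / 21 - 20 / 21)) * sin (π * (2 * (4 / 21) - 20 / 21))
          * sin (π * (4 / 21 - 2 * (20 / 21)))|
      = (7 - Real.sqrt 21) / 4 := by
  have hsqrt21 : Real.sqrt 21 = Real.sqrt 3 * Real.sqrt 7 := by
    rw [show (21:ℝ) = 3 * 7 by norm_num, Real.sqrt_mul (by norm_num)]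
  have hlt : Real.sqrt 21 < 7 := by
    nlinarith [Real.sq_sqrt (by norm_num : (0:ℝ) ≤ 21), Real.sqrt_nonneg 21]
  have key : 256 * π ^ 2 * sin (π * (4 / 21)) * sin (π * (20 / 21))
      * sin (π * (4 / 21 + 20 / 21)) * sin (π * (4 / 21 - 20 / 21))
      * sin (π * (2 * (4 / 21) - 20 / 21)) * sin (π * (4 / 21 - 2 * (20 / 21)))
      = -(8 * π ^ 2 * ((7 - Real.sqrt 21) / 4)) := by
    rw [hsqrt21, sqrt7_eq]
    rw [show π * (4 / 21) = π/3 - π/7 by ring,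
        show π * (20 / 21) = π - (π/3 - 2*(π/7)) by ring,
        show π * (4 / 21 + 20 / 21) = π + π/7 by ring,
        show π * (4 / 21 - 20 / 21) = -(π - (2*(2*(π/7)) - π/3)) by ring,
        show π * (2 * (4 / 21) - 20 / 21) = -(2*(2*(π/7))) by ring,
        show π * (4 / 21 - 2 * (20 / 21)) = -(2*π - 2*(π/7)) by ring,
        Real.sin_neg, Real.sin_neg, Real.sin_neg, Real.sin_pi_sub, Real.sin_pi_sub,
        Real.sin_add, Real.sin_pi, Real.cos_pi, Real.sin_sub, Real.sin_sub, Real.sin_sub, Real.sin_sub,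
        Real.sin_two_pi, Real.cos_two_pi, Real.sin_pi_div_three, Real.cos_pi_div_three]
    simp only [Real.sin_two_mul, Real.cos_two_mul]
    set c := Real.cos (π/7) with hc
    set s := Real.sin (π/7) with hs
    set r := Real.sqrt 3 with hr
    have pyth : s ^ 2 + c ^ 2 = 1 := Real.sin_sq_add_cos_sq (π/7)
    have hr2 : r ^ 2 = 3 := Real.sq_sqrt (by norm_num)
    have hp := cos7_cubic
    rw [← hc] at hp
    linear_combination
      (π^2 * ((-768:ℝ)*c^2 + (12544:ℝ)*c^4 + (-69120:ℝ)*c^6 + (163840:ℝ)*c^8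
        + (-172032:ℝ)*c^10 + (65536:ℝ)*c^12 + (-768:ℝ)*s^1*c^3*r^1 + (5632:ℝ)*s^1*c^5*r^1
        + (-12288:ℝ)*s^1*c^7*r^1 + (8192:ℝ)*s^1*c^9*r^1 + (-768:ℝ)*s^2*c^2
        + (11776:ℝ)*s^2*c^4 + (-57344:ℝ)*s^2*c^6 + (106496:ℝ)*s^2*c^8 + (-65536:ℝ)*s^2*c^10
        + (-1536:ℝ)*s^3*c^3*r^1 + (13312:ℝ)*s^3*c^5*r^1 + (-32768:ℝ)*s^3*c^7*r^1
        + (24576:ℝ)*s^3*c^9*r^1 + (-2048:ℝ)*s^4*c^4 + (8192:ℝ)*s^4*c^6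
        + (-8192:ℝ)*s^4*c^8)) * pyth
      + (π^2 * ((256:ℝ)*s^3*c^3*r^1 + (-3072:ℝ)*s^3*c^5*r^1 + (11264:ℝ)*s^3*c^7*r^1
        + (-16384:ℝ)*s^3*c^9*r^1 + (8192:ℝ)*s^3*c^11*r^1 + (-256:ℝ)*s^4*c^2
        + (4608:ℝ)*s^4*c^4 + (-22528:ℝ)*s^4*c^6 + (40960:ℝ)*s^4*c^8
        + (-24576:ℝ)*s^4*c^10)) * hr2
      + (π^2 * ((14:ℝ) + (56:ℝ)*c^1 + (-488:ℝ)*c^2 + (-1840:ℝ)*c^3 + (3552:ℝ)*c^4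
        + (10752:ℝ)*c^5 + (-9728:ℝ)*c^6 + (-24320:ℝ)*c^7 + (10752:ℝ)*c^8 + (23552:ℝ)*c^9
        + (-4096:ℝ)*c^10 + (-8192:ℝ)*c^11 + (8:ℝ)*s^1*r^1 + (24:ℝ)*s^1*c^1*r^1
        + (112:ℝ)*s^1*c^2*r^1 + (-288:ℝ)*s^1*c^3*r^1 + (-896:ℝ)*s^1*c^4*r^1
        + (768:ℝ)*s^1*c^5*r^1 + (1792:ℝ)*s^1*c^6*r^1 + (-512:ℝ)*s^1*c^7*r^1
        + (-1024:ℝ)*s^1*c^8*r^1)) * hp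
  have h0 : 0 ≤ 8 * π ^ 2 * ((7 - Real.sqrt 21) / 4) := by
    have hpi2 : 0 < π ^ 2 := by positivity
    nlinarith
  rw [key, abs_neg, abs_of_nonneg h0]
  have hne : π ≠ 0 := Real.pi_ne_zero
  field_simp
end
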